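/- Let λ > 0, L > 0 and x ∈ ℝⁿ, set T = T_{λ,L}(x), and suppose |supp(x) ∪ supp(T)| ≤ s for an integer s ≥ 1 with L ≥ ρ₊(A, s). Then φ_λ(T) ≤ ψ_{λ,L}(x; T), and consequently φ_λ(T) ≤ φ_λ(x) − (1/(2L))‖g_{λ,L}(x)‖₂². -/

import Mathlib

open scoped BigOperators
open Matrix

noncomputable section

namespace PGH

/-- Euclidean dot product on `Fin n → ℝ`. -/
def dot {n : ℕ} (x y : Fin n → ℝ) : ℝ := ∑ i, x i * y i

/-- Squared Euclidean norm. -/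
def sqnorm {n : ℕ} (x : Fin n → ℝ) : ℝ := ∑ i, (x i) ^ 2

/-- Euclidean (ℓ₂) norm. -/
noncomputable def l2 {n : ℕ} (x : Fin n → ℝ) : ℝ := Real.sqrt (sqnorm x)

/-- ℓ₁ norm. -/
def l1 {n : ℕ} (x : Fin n → ℝ) : ℝ := ∑ i, |x i|

/-- ℓ∞ norm (maximum absolute coordinate). -/
noncomputable def linf {n : ℕ} (x : Fin n → ℝ) : ℝ := ⨆ i, |x i|

/-- Support of a vector. -/
def supp {n : ℕ} (x : Fin n → ℝ) : Finset (Fin n) := Finset.univ.filter (fun i => x i ≠ 0)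

/-- Number of nonzero coordinates. -/
def l0 {n : ℕ} (x : Fin n → ℝ) : ℕ := (supp x).card

/-- Number of nonzero coordinates within the index set `S`
(i.e. `‖x_S‖₀` for the restriction of `x` to `S`). -/
def l0on {n : ℕ} (S : Finset (Fin n)) (x : Fin n → ℝ) : ℕ :=
  (S.filter (fun i => x i ≠ 0)).card

/-- ℓ₁ norm of the restriction of `x` to the index set `S`. -/
def l1on {n : ℕ} (S : Finset (Fin n)) (x : Fin n → ℝ) : ℝ := ∑ i ∈ S, |x i|

/-- Gradient of `f(x) = (1/2)‖Ax - b‖₂²`, namely `Aᵀ(Ax - b)`. -/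
def grad {m n : ℕ} (A : Matrix (Fin m) (Fin n) ℝ) (b : Fin m → ℝ) (x : Fin n → ℝ) :
    Fin n → ℝ :=
  Aᵀ.mulVec (A.mulVec x - b)

/-- Least-squares objective `f(x) = (1/2)‖Ax - b‖₂²`. -/
def fls {m n : ℕ} (A : Matrix (Fin m) (Fin n) ℝ) (b : Fin m → ℝ) (x : Fin n → ℝ) : ℝ :=
  sqnorm (A.mulVec x - b) / 2

/-- ℓ₁-regularized least-squares objective `φ_λ(x) = f(x) + λ‖x‖₁`. -/
def phi {m n : ℕ} (A : Matrix (Fin m) (Fin n) ℝ) (b : Fin m → ℝ) (lam : ℝ)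
    (x : Fin n → ℝ) : ℝ :=
  fls A b x + lam * l1 x

/-- Restricted maximal eigenvalue `ρ₊(A, s)`. -/
noncomputable def rhoPlus {m n : ℕ} (A : Matrix (Fin m) (Fin n) ℝ) (s : ℕ) : ℝ :=
  sSup {r | ∃ x : Fin n → ℝ, x ≠ 0 ∧ l0 x ≤ s ∧ r = sqnorm (A.mulVec x) / sqnorm x}

/-- Restricted minimal eigenvalue `ρ₋(A, s)`. -/
noncomputable def rhoMinus {m n : ℕ} (A : Matrix (Fin m) (Fin n) ℝ) (s : ℕ) : ℝ :=
  sInf {r | ∃ x : Fin n → ℝ, x ≠ 0 ∧ l0 x ≤ s ∧ r = sqnorm (A.mulVec x) / sqnorm x}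

/-- `ξ` is a subgradient of the ℓ₁ norm at `x`. -/
def IsSubgrad {n : ℕ} (x ξ : Fin n → ℝ) : Prop :=
  ∀ i, (x i ≠ 0 → ξ i = Real.sign (x i)) ∧ (x i = 0 → |ξ i| ≤ 1)

/-- Optimality residue `ω_λ(x) = min_{ξ ∈ ∂‖x‖₁} ‖Aᵀ(Ax−b) + λξ‖_∞`. -/
noncomputable def omega {m n : ℕ} (A : Matrix (Fin m) (Fin n) ℝ) (b : Fin m → ℝ)
    (lam : ℝ) (x : Fin n → ℝ) : ℝ :=
  sInf {r | ∃ ξ : Fin n → ℝ, IsSubgrad x ξ ∧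
    r = linf (fun i => grad A b x i + lam * ξ i)}

/-- The local model `ψ_{λ,L}(y; x)`. -/
def psi {m n : ℕ} (A : Matrix (Fin m) (Fin n) ℝ) (b : Fin m → ℝ) (lam L : ℝ)
    (y x : Fin n → ℝ) : ℝ :=
  fls A b y + dot (grad A b y) (x - y) + L / 2 * sqnorm (x - y) + lam * l1 x

/-- The noise-domination condition
`λ ≥ max{4, (γ+1)/((1−δ')γ−(1+δ'))} ⬝ ‖Aᵀz‖_∞`. -/
def noiseCond {m n : ℕ} (A : Matrix (Fin m) (Fin n) ℝ) (z : Fin m → ℝ)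
    (dp gam lam : ℝ) : Prop :=
  lam ≥ max 4 ((gam + 1) / ((1 - dp) * gam - (1 + dp))) * linf (Aᵀ.mulVec z)

/-!
Since `T - x` is supported in `supp x ∪ supp T`, `‖A(T - x)‖² ≤ ρ₊(A, s) ‖T - x‖² ≤ L ‖T - x‖²`, so
the exact second-order expansion of `f` at `x` is dominated by the quadratic part of `ψ(x; T)`.
For the second claim, `ψ(x; ·)` is `L`-strongly convex along every segment (its quadratic part is
`L/2 ‖· - x‖²` and `λ‖·‖₁` is convex); comparing `T` with the points of the segment towards `x` and
letting them approach `T` gives `ψ(x; T) + L/2 ‖x - T‖² ≤ ψ(x; x) = φ(x)`.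
-/

section Norms

variable {n : ℕ}

lemma sqnorm_nonneg (v : Fin n → ℝ) : 0 ≤ sqnorm v :=
  Finset.sum_nonneg fun _ _ => sq_nonneg _

lemma sqnorm_pos {v : Fin n → ℝ} (hv : v ≠ 0) : 0 < sqnorm v := by
  obtain ⟨i, hi⟩ := Function.ne_iff.mp hv
  exact Finset.sum_pos' (fun _ _ => sq_nonneg _) ⟨i, Finset.mem_univ i, pow_two_pos_of_ne_zero hi⟩

lemma sqnorm_add (u w : Fin n → ℝ) :
    sqnorm (u + w) = sqnorm u + 2 * dot u w + sqnorm w := by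
  simp only [sqnorm, dot, Pi.add_apply, Finset.mul_sum, ← Finset.sum_add_distrib]
  exact Finset.sum_congr rfl fun _ _ => by ring

lemma sqnorm_smul (c : ℝ) (v : Fin n → ℝ) : sqnorm (c • v) = c ^ 2 * sqnorm v := by
  simp only [sqnorm, Pi.smul_apply, smul_eq_mul, Finset.mul_sum]
  exact Finset.sum_congr rfl fun _ _ => by ring

lemma sqnorm_convex_comb (t : ℝ) (a b : Fin n → ℝ) :
    sqnorm ((1 - t) • a + t • b) =
      (1 - t) * sqnorm a + t * sqnorm b - t * (1 - t) * sqnorm (b - a) := by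
  simp only [sqnorm, Pi.add_apply, Pi.sub_apply, Pi.smul_apply, smul_eq_mul, Finset.mul_sum,
    ← Finset.sum_add_distrib, ← Finset.sum_sub_distrib]
  exact Finset.sum_congr rfl fun _ _ => by ring

lemma dot_convex_comb (t : ℝ) (g a b : Fin n → ℝ) :
    dot g ((1 - t) • a + t • b) = (1 - t) * dot g a + t * dot g b := by
  simp only [dot, Pi.add_apply, Pi.smul_apply, smul_eq_mul, Finset.mul_sum,
    ← Finset.sum_add_distrib]
  exact Finset.sum_congr rfl fun _ _ => by ring

lemma l1_convex_comb_le {t : ℝ} (ht0 : 0 ≤ t) (ht1 : t ≤ 1) (a b : Fin n → ℝ) :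
    l1 ((1 - t) • a + t • b) ≤ (1 - t) * l1 a + t * l1 b := by
  simp only [l1, Finset.mul_sum, ← Finset.sum_add_distrib]
  refine Finset.sum_le_sum fun i _ => ?_
  calc |(1 - t) * a i + t * b i| ≤ |(1 - t) * a i| + |t * b i| := abs_add_le _ _
    _ = (1 - t) * |a i| + t * |b i| := by
      rw [abs_mul, abs_mul, abs_of_nonneg (sub_nonneg.mpr ht1), abs_of_nonneg ht0]

lemma supp_sub_subset (x y : Fin n → ℝ) : supp (y - x) ⊆ supp x ∪ supp y := by
  intro i hi
  simp only [supp, Finset.mem_union, Finset.mem_filter, Finset.mem_univ, true_and,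
    Pi.sub_apply] at hi ⊢
  by_contra! h
  exact hi (by rw [h.1, h.2, sub_zero])

end Norms

lemma add_le_of_le_convex_comb {a b c : ℝ}
    (h : ∀ t ∈ Set.Ioc (0 : ℝ) 1, a ≤ (1 - t) * a + t * b - c * (t * (1 - t))) :
    a + c ≤ b := by
  have hdiv : ∀ t ∈ Set.Ioc (0 : ℝ) 1, a + c * (1 - t) ≤ b := by
    intro t ht
    refine le_of_mul_le_mul_left ?_ ht.1
    linear_combination h t ht
  have hlim : Filter.Tendsto (fun t : ℝ => a + c * (1 - t)) (nhdsWithin 0 (Set.Ioi 0))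
      (nhds (a + c)) := by
    refine tendsto_nhdsWithin_of_tendsto_nhds ?_
    exact (by fun_prop : Continuous fun t : ℝ => a + c * (1 - t)).tendsto' 0 (a + c) (by simp)
  refine le_of_tendsto hlim ?_
  filter_upwards [Ioc_mem_nhdsGT (zero_lt_one' ℝ)] using hdiv

section LeastSquares

variable {m n : ℕ} (A : Matrix (Fin m) (Fin n) ℝ) (b : Fin m → ℝ)

lemma sqnorm_mulVec_le_frobenius (v : Fin n → ℝ) :
    sqnorm (A *ᵥ v) ≤ (∑ i, ∑ j, A i j ^ 2) * sqnorm v := by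
  unfold sqnorm
  rw [Finset.sum_mul]
  exact Finset.sum_le_sum fun i _ => by
    simpa only [mulVec, dotProduct] using Finset.sum_mul_sq_le_sq_mul_sq Finset.univ (A i) v

lemma sqnorm_mulVec_le_rhoPlus_mul {s : ℕ} {v : Fin n → ℝ} (hv : l0 v ≤ s) :
    sqnorm (A *ᵥ v) ≤ rhoPlus A s * sqnorm v := by
  rcases eq_or_ne v 0 with rfl | hv0
  · simp [sqnorm]
  have hbdd : BddAbove
      {r | ∃ x : Fin n → ℝ, x ≠ 0 ∧ l0 x ≤ s ∧ r = sqnorm (A *ᵥ x) / sqnorm x} := by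
    refine ⟨∑ i, ∑ j, A i j ^ 2, ?_⟩
    rintro r ⟨w, hw, -, rfl⟩
    exact (div_le_iff₀ (sqnorm_pos hw)).mpr (sqnorm_mulVec_le_frobenius A w)
  have hratio : sqnorm (A *ᵥ v) / sqnorm v ≤ rhoPlus A s := le_csSup hbdd ⟨v, hv0, hv, rfl⟩
  exact (div_le_iff₀ (sqnorm_pos hv0)).mp hratio

lemma fls_eq_add_dot_grad (x y : Fin n → ℝ) :
    fls A b y = fls A b x + dot (grad A b x) (y - x) + sqnorm (A *ᵥ (y - x)) / 2 := by
  have hres : A *ᵥ y - b = (A *ᵥ x - b) + A *ᵥ (y - x) := by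
    rw [mulVec_sub]; abel
  have hadj : dot (grad A b x) (y - x) = dot (A *ᵥ x - b) (A *ᵥ (y - x)) := by
    simp only [dot, grad, ← dotProduct.eq_1, mulVec_transpose, dotProduct_mulVec]
  rw [fls, fls, hres, sqnorm_add, hadj]
  ring

lemma phi_le_psi_of_rhoPlus_le {lam L : ℝ} {s : ℕ} (hLs : rhoPlus A s ≤ L) {x y : Fin n → ℝ}
    (hs : l0 (y - x) ≤ s) : phi A b lam y ≤ psi A b lam L x y := by
  have hquad : sqnorm (A *ᵥ (y - x)) ≤ L * sqnorm (y - x) :=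
    (sqnorm_mulVec_le_rhoPlus_mul A hs).trans
      (mul_le_mul_of_nonneg_right hLs (sqnorm_nonneg _))
  rw [phi, psi, fls_eq_add_dot_grad A b x y]
  linarith

lemma psi_self (lam L : ℝ) (x : Fin n → ℝ) : psi A b lam L x x = phi A b lam x := by
  simp [psi, phi, dot, sqnorm]

lemma psi_convex_comb_le {lam : ℝ} (hlam : 0 ≤ lam) (L : ℝ) {t : ℝ} (ht0 : 0 ≤ t) (ht1 : t ≤ 1)
    (x y u : Fin n → ℝ) :
    psi A b lam L x ((1 - t) • y + t • u) ≤
      (1 - t) * psi A b lam L x y + t * psi A b lam L x u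
        - L / 2 * sqnorm (u - y) * (t * (1 - t)) := by
  have hshift : (1 - t) • y + t • u - x = (1 - t) • (y - x) + t • (u - x) := by module
  have hl1 := mul_le_mul_of_nonneg_left (l1_convex_comb_le ht0 ht1 y u) hlam
  have hdiff : u - x - (y - x) = u - y := sub_sub_sub_cancel_right u y x
  simp only [psi, hshift, dot_convex_comb, sqnorm_convex_comb, hdiff]
  linear_combination hl1

lemma psi_add_le_of_isMin {lam : ℝ} (hlam : 0 ≤ lam) (L : ℝ) {x T : Fin n → ℝ}
    (hT : ∀ u, psi A b lam L x T ≤ psi A b lam L x u) (u : Fin n → ℝ) :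
    psi A b lam L x T + L / 2 * sqnorm (u - T) ≤ psi A b lam L x u :=
  add_le_of_le_convex_comb fun _ ht =>
    (hT _).trans (psi_convex_comb_le A b hlam L ht.1.le ht.2 x T u)

end LeastSquares

theorem stmt16_general {m n : ℕ} (A : Matrix (Fin m) (Fin n) ℝ) (b : Fin m → ℝ)
    (lam L : ℝ) (hlam : 0 < lam) (hL : 0 < L)
    (x T : Fin n → ℝ) (hT : ∀ u, psi A b lam L x T ≤ psi A b lam L x u)
    (s : ℕ) (hsupp : (supp x ∪ supp T).card ≤ s)
    (hLs : rhoPlus A s ≤ L) :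
    phi A b lam T ≤ psi A b lam L x T ∧
    phi A b lam T ≤ phi A b lam x - 1 / (2 * L) * sqnorm (fun i => L * (x i - T i)) := by
  have hdescent : phi A b lam T ≤ psi A b lam L x T :=
    phi_le_psi_of_rhoPlus_le A b hLs ((Finset.card_le_card (supp_sub_subset x T)).trans hsupp)
  have hstrong := psi_add_le_of_isMin A b hlam.le L hT x
  have hscale : 1 / (2 * L) * sqnorm (fun i => L * (x i - T i)) = L / 2 * sqnorm (x - T) := by
    rw [show (fun i => L * (x i - T i)) = L • (x - T) from rfl, sqnorm_smul]
    field_simp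
  rw [psi_self] at hstrong
  exact ⟨hdescent, by linarith⟩

theorem stmt16 {m n : ℕ} (A : Matrix (Fin m) (Fin n) ℝ) (b : Fin m → ℝ)
    (lam L : ℝ) (hlam : 0 < lam) (hL : 0 < L)
    (x T : Fin n → ℝ) (hT : ∀ u, psi A b lam L x T ≤ psi A b lam L x u)
    (s : ℕ) (hs : 1 ≤ s) (hsupp : (supp x ∪ supp T).card ≤ s)
    (hLs : rhoPlus A s ≤ L) :
    phi A b lam T ≤ psi A b lam L x T ∧
    phi A b lam T ≤ phi A b lam x - 1 / (2 * L) * sqnorm (fun i => L * (x i - T i)) :=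
  stmt16_general A b lam L hlam hL x T hT s hsupp hLs

end PGH
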